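/- For every block graph G with at least one vertex, b*(G) = m*(G) + 1. -/

import Mathlib

variable {V : Type*} {W : Type*}

/-- A proper coloring of `G` using colors `{1, …, k}`: colors lie in `{1,…,k}`,
adjacent vertices get different colors, and every color in `{1,…,k}` is used. -/
def IsProperKColoring (G : SimpleGraph V) (k : ℕ) (c : V → ℕ) : Prop :=
  (∀ v, c v ∈ Set.Icc 1 k) ∧
  (∀ u v, G.Adj u v → c u ≠ c v) ∧
  (∀ j ∈ Set.Icc 1 k, ∃ v, c v = j)

/-- `u` is a b-vertex: every color `j ∈ {1,…,k}` with `j ≠ c u` appears on a neighbor of `u`. -/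
def IsBVertex (G : SimpleGraph V) (k : ℕ) (c : V → ℕ) (u : V) : Prop :=
  ∀ j ∈ Set.Icc 1 k, j ≠ c u → ∃ w, G.Adj u w ∧ c w = j

/-- `u` is a nice vertex: it is a b-vertex and for every color `j ≠ c u` in `{1,…,k}`
it has a b-vertex neighbor of color `j`. -/
def IsNiceVertex (G : SimpleGraph V) (k : ℕ) (c : V → ℕ) (u : V) : Prop :=
  IsBVertex G k c u ∧
  ∀ j ∈ Set.Icc 1 k, j ≠ c u → ∃ w, G.Adj u w ∧ c w = j ∧ IsBVertex G k c w

/-- A Grundy coloring using `k` colors: proper, and every vertex of color `j` has a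
neighbor of each smaller color `i ≥ 1`. -/
def IsGrundyColoring (G : SimpleGraph V) (k : ℕ) (c : V → ℕ) : Prop :=
  IsProperKColoring G k c ∧
  ∀ i j : ℕ, 1 ≤ i → i < j → j ≤ k → ∀ v, c v = j → ∃ w, G.Adj v w ∧ c w = i

/-- A z-coloring: a Grundy coloring with a nice vertex of (top) color `k`. -/
def IsZColoring (G : SimpleGraph V) (k : ℕ) (c : V → ℕ) : Prop :=
  IsGrundyColoring G k c ∧ ∃ u, c u = k ∧ IsNiceVertex G k c u

/-- A b*-coloring: a proper coloring with a nice vertex of (top) color `k`. -/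
def IsBStarColoring (G : SimpleGraph V) (k : ℕ) (c : V → ℕ) : Prop :=
  IsProperKColoring G k c ∧ ∃ u, c u = k ∧ IsNiceVertex G k c u

/-- The z-chromatic number: largest `k` admitting a z-coloring with `k` colors. -/
noncomputable def zNum (G : SimpleGraph V) : ℕ :=
  sSup {k | ∃ c : V → ℕ, IsZColoring G k c}

/-- The b*-chromatic number: largest `k` admitting a b*-coloring with `k` colors. -/
noncomputable def bStar (G : SimpleGraph V) : ℕ :=
  sSup {k | ∃ c : V → ℕ, IsBStarColoring G k c}

/-- `m*(G)`: the largest `k` such that some vertex `u` has `k` distinct neighbors,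
each of degree at least `k`. -/
noncomputable def mStar (G : SimpleGraph V) : ℕ :=
  sSup {k | ∃ (u : V) (s : Finset V), (↑s : Set V) ⊆ G.neighborSet u ∧ s.card = k ∧
    ∀ v ∈ s, k ≤ (G.neighborSet v).ncard}

/-- The clique number `ω(G)`. -/
noncomputable def omegaNum (G : SimpleGraph V) : ℕ :=
  sSup {n | ∃ s : Finset V, G.IsNClique n s}
/-- `B` is (the vertex set of) a block of `G`: a maximal set of vertices inducing a
connected subgraph with no cut vertex. -/
def IsBlockSet (G : SimpleGraph V) (B : Set V) : Prop :=
  B.Nonempty ∧ (G.induce B).Connected ∧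
  (∀ v ∈ B, (G.induce (B \ {v})).Preconnected) ∧
  ∀ B' : Set V, B ⊆ B' → (G.induce B').Connected →
    (∀ v ∈ B', (G.induce (B' \ {v})).Preconnected) → B' = B

/-- A block graph: every block is a clique. -/
def IsBlockGraph (G : SimpleGraph V) : Prop :=
  ∀ B : Set V, IsBlockSet G B → G.IsClique B

/-!
Upper bound, valid in every finite graph: the nice vertex of a b*-colouring with `k` colours has
`k - 1` neighbours that are b-vertices, hence of degree at least `k - 1`, so `k - 1 ≤ m*`.

Lower bound: let `u` and `s ⊆ N(u)` witness `m* = k`. In a block graph every clique has at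
most `k + 1` vertices, and a proper colouring of a set `S` extends greedily with `ω(G)` colours
as long as any two vertices of `S` joined in `G` are joined inside `S`: the coloured neighbours
of the next vertex then lie on a common cycle through it, hence in one block, hence form a
clique. Colour `u` with `k + 1` and `s` with `1, …, k`, and extend. For `x ∈ s` the clique
`N[x] ∩ N[u]` shows `|N[x] ∩ N[u]|` colours; as `deg x ≥ k`, the outer neighbours
`N(x) \ N[u]` can carry all the missing ones. Outer neighbours of distinct `x` are neither
shared nor adjacent, so recolouring them keeps the colouring of `N[u]` proper and extends again.
Then `u` is a nice vertex.
-/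

open SimpleGraph
open scoped Finset

namespace SimpleGraph

variable {G : SimpleGraph V}

lemma preconnected_induce_of_forall_walk {T : Set V} {c : V}
    (h : ∀ a ∈ T, ∃ p : G.Walk c a, ∀ z ∈ p.support, z ∈ T) : (G.induce T).Preconnected := by
  have hreach : ∀ a : T, ∃ hc : c ∈ T, (G.induce T).Reachable ⟨c, hc⟩ a := fun ⟨a, ha⟩ ↦
    let ⟨p, hp⟩ := h a ha
    ⟨hp c p.start_mem_support, ⟨p.induce T hp⟩⟩
  intro a b
  exact (hreach a).2.symm.trans (hreach b).2

lemma Walk.IsPath.exists_walk_from_end_avoiding {x y v a : V} {q : G.Walk x y} (hq : q.IsPath)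
    (ha : a ∈ q.support) (hav : a ≠ v) :
    (∃ p : G.Walk x a, ∀ z ∈ p.support, z ∈ q.support ∧ z ≠ v) ∨
      ∃ p : G.Walk y a, ∀ z ∈ p.support, z ∈ q.support ∧ z ≠ v := by
  classical
  by_cases hv : v ∈ (q.takeUntil a ha).support
  · right
    refine ⟨(q.dropUntil a ha).reverse, fun z hz ↦ ?_⟩
    rw [Walk.support_reverse, List.mem_reverse] at hz
    refine ⟨q.support_dropUntil_subset_support ha hz, ?_⟩
    rintro rfl
    have hnd := hq.support_nodup
    rw [← q.take_spec ha, Walk.support_append] at hnd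
    rw [← Walk.cons_tail_support] at hz
    rcases List.mem_cons.1 hz with h | h
    · exact hav h.symm
    · exact List.disjoint_of_nodup_append hnd hv h
  · left
    exact ⟨q.takeUntil a ha, fun z hz ↦
      ⟨q.support_takeUntil_subset_support ha hz, fun h ↦ hv (h ▸ hz)⟩⟩

lemma IsClique.ncard_le_cliqueNum [Finite V] {T : Set V} (h : G.IsClique T) :
    T.ncard ≤ G.cliqueNum := by
  have hT := T.toFinite
  rw [← hT.coe_toFinset] at h
  rw [Set.ncard_eq_toFinset_card T hT]
  exact IsClique.card_le_cliqueNum (tc := h)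

lemma exists_mem_forall_adj_ne_of_isClique [Finite V] {α : Type*} {C : Finset α}
    (hC : G.cliqueNum ≤ #C) {S : Set V} {v : V} (hv : v ∉ S)
    (hcl : G.IsClique (G.neighborSet v ∩ S)) (c : V → α) :
    ∃ a ∈ C, ∀ y ∈ S, G.Adj v y → c y ≠ a := by
  have hclv : G.IsClique (insert v (G.neighborSet v ∩ S)) :=
    isClique_insert.2 ⟨hcl, fun y hy _ ↦ hy.1⟩
  have hcard := hclv.ncard_le_cliqueNum
  rw [Set.ncard_insert_of_notMem (fun h ↦ hv h.2)] at hcard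
  have hlt : (c '' (G.neighborSet v ∩ S)).ncard < (C : Set α).ncard := by
    rw [Set.ncard_coe_finset]
    exact (Set.ncard_image_le (Set.toFinite _)).trans_lt (by omega)
  obtain ⟨a, haC, ha⟩ := Set.exists_mem_notMem_of_ncard_lt_ncard hlt
  exact ⟨a, haC, fun y hy hvy hya ↦ ha ⟨y, ⟨hvy, hy⟩, hya⟩⟩

def ConnectsWithin (G : SimpleGraph V) (S : Set V) : Prop :=
  ∀ x ∈ S, ∀ y ∈ S, G.Reachable x y → ∃ p : G.Walk x y, ∀ z ∈ p.support, z ∈ S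

lemma connectsWithin_of_forall_walk {S : Set V} {c : V}
    (h : ∀ a ∈ S, ∃ p : G.Walk c a, ∀ z ∈ p.support, z ∈ S) : G.ConnectsWithin S := by
  intro x hx y hy _
  obtain ⟨p, hp⟩ := h x hx
  obtain ⟨q, hq⟩ := h y hy
  refine ⟨p.reverse.append q, fun z hz ↦ ?_⟩
  rw [Walk.mem_support_append_iff, Walk.support_reverse, List.mem_reverse] at hz
  exact hz.elim (hp z) (hq z)

namespace ConnectsWithin

variable {S : Set V}

lemma insert_of_forall_reachable (hS : G.ConnectsWithin S) {v : V}
    (hv : ∀ y ∈ S, G.Reachable v y → ∃ p : G.Walk v y, ∀ z ∈ p.support, z ∈ insert v S) :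
    G.ConnectsWithin (insert v S) := by
  have hv' : ∀ y ∈ insert v S, G.Reachable v y →
      ∃ p : G.Walk v y, ∀ z ∈ p.support, z ∈ insert v S := by
    rintro y (rfl | hy) hvy
    exacts [⟨.nil, fun z hz ↦ .inl (Walk.mem_support_nil_iff.1 hz)⟩, hv y hy hvy]
  rintro x (rfl | hx) y hy hxy
  · exact hv' y hy hxy
  rcases hy with rfl | hy
  · obtain ⟨p, hp⟩ := hv' x (.inr hx) hxy.symm
    exact ⟨p.reverse, fun z hz ↦ hp z (by simpa using hz)⟩
  obtain ⟨p, hp⟩ := hS x hx y hy hxy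
  exact ⟨p, fun z hz ↦ .inr (hp z hz)⟩

lemma insert_of_adj (hS : G.ConnectsWithin S) {v s : V} (hs : s ∈ S) (hvs : G.Adj v s) :
    G.ConnectsWithin (insert v S) := by
  refine hS.insert_of_forall_reachable fun y hy hvy ↦ ?_
  obtain ⟨p, hp⟩ := hS s hs y hy (hvs.symm.reachable.trans hvy)
  refine ⟨.cons hvs p, fun z hz ↦ ?_⟩
  rcases List.mem_cons.1 (Walk.support_cons _ _ ▸ hz) with rfl | hz
  exacts [.inl rfl, .inr (hp z hz)]

lemma exists_insert (hS : G.ConnectsWithin S) (hne : S ≠ Set.univ) :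
    ∃ v ∉ S, G.ConnectsWithin (insert v S) := by
  by_cases hbd : ∃ v ∉ S, ∃ s ∈ S, G.Adj v s
  · obtain ⟨v, hv, s, hs, hvs⟩ := hbd
    exact ⟨v, hv, hS.insert_of_adj hs hvs⟩
  push Not at hbd
  obtain ⟨v, hv⟩ := (Set.ne_univ_iff_exists_notMem S).1 hne
  refine ⟨v, hv, hS.insert_of_forall_reachable fun y hy ⟨p⟩ ↦ ?_⟩
  obtain ⟨d, -, hd₁, hd₂⟩ := p.exists_boundary_dart Sᶜ hv (by simpa using hy)
  exact absurd d.adj (hbd _ hd₁ _ (not_not.1 hd₂))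

end ConnectsWithin

def closedNeighborSet (G : SimpleGraph V) (v : V) : Set V := insert v (G.neighborSet v)

lemma connectsWithin_closedNeighborSet_union {u : V} {s : Set V} (hs : s ⊆ G.neighborSet u)
    {W : V → Set V} (hW : ∀ x ∈ s, W x ⊆ G.neighborSet x) :
    G.ConnectsWithin (G.closedNeighborSet u ∪ ⋃ x ∈ s, W x) := by
  refine connectsWithin_of_forall_walk (c := u) fun a ha ↦ ?_
  rcases ha with (rfl | hua) | ha
  · exact ⟨.nil, by simp [closedNeighborSet]⟩
  · refine ⟨.cons (show G.Adj u a from hua) .nil, fun z hz ↦ ?_⟩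
    obtain rfl | rfl : z = u ∨ z = a := by simpa using hz
    exacts [.inl (.inl rfl), .inl (.inr hua)]
  · obtain ⟨x, hx, hax⟩ := Set.mem_iUnion₂.1 ha
    refine ⟨.cons (show G.Adj u x from hs hx) (.cons (show G.Adj x a from hW x hx hax) .nil),
      fun z hz ↦ ?_⟩
    obtain rfl | rfl | rfl : z = u ∨ z = x ∨ z = a := by simpa using hz
    exacts [.inl (.inl rfl), .inl (.inr (hs hx)), .inr ha]

end SimpleGraph

lemma isBVertex_of_subset_image {G : SimpleGraph V} {k : ℕ} {c : V → ℕ} {x : V}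
    (h : Set.Icc 1 k ⊆ c '' G.closedNeighborSet x) : IsBVertex G k c x := by
  intro j hj hjx
  obtain ⟨y, rfl | hxy, rfl⟩ := h hj
  exacts [absurd rfl hjx, ⟨y, hxy, rfl⟩]

lemma Set.PairwiseDisjoint.exists_eqOn {ι α β : Type*} [Nonempty β] {s : Set ι} {W : ι → Set α}
    (hW : s.PairwiseDisjoint W) (g : ι → α → β) : ∃ d : α → β, ∀ i ∈ s, Set.EqOn d (g i) (W i) := by
  classical
  refine ⟨fun a ↦ if h : ∃ i ∈ s, a ∈ W i then g h.choose a else Classical.arbitrary β,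
    fun i hi a ha ↦ ?_⟩
  have h : ∃ i ∈ s, a ∈ W i := ⟨i, hi, ha⟩
  simp only [dif_pos h, hW.elim_set h.choose_spec.1 hi a h.choose_spec.2 ha]

section mStar

variable [Finite V] {G : SimpleGraph V}

lemma bddAbove_setOf_mStar : BddAbove {k | ∃ (u : V) (s : Finset V),
    (↑s : Set V) ⊆ G.neighborSet u ∧ s.card = k ∧ ∀ v ∈ s, k ≤ (G.neighborSet v).ncard} := by
  refine ⟨Nat.card V, ?_⟩
  rintro _ ⟨-, s, -, rfl, -⟩
  rw [← Set.ncard_coe_finset]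
  exact Set.ncard_le_card _

lemma card_le_mStar (u : V) (s : Finset V) (hs : ↑s ⊆ G.neighborSet u)
    (hdeg : ∀ v ∈ s, #s ≤ (G.neighborSet v).ncard) : #s ≤ mStar G :=
  le_csSup bddAbove_setOf_mStar (by exact ⟨u, s, hs, rfl, hdeg⟩)

lemma exists_mStar [Nonempty V] : ∃ (u : V) (s : Finset V), ↑s ⊆ G.neighborSet u ∧
    #s = mStar G ∧ ∀ v ∈ s, mStar G ≤ (G.neighborSet v).ncard :=
  Nat.sSup_mem (by exact ⟨0, Classical.arbitrary V, ∅, by simp⟩) bddAbove_setOf_mStar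

lemma cliqueNum_le_mStar_add_one : G.cliqueNum ≤ mStar G + 1 := by
  classical
  obtain ⟨t, ht⟩ := G.exists_isNClique_cliqueNum
  rw [← ht.card_eq]
  obtain rfl | ⟨v, hv⟩ := t.eq_empty_or_nonempty
  · simp
  have hnbr : ∀ w ∈ t, ↑(t.erase w) ⊆ G.neighborSet w := fun w hw z hz ↦
    ht.isClique hw (Finset.mem_of_mem_erase hz) (Finset.ne_of_mem_erase hz).symm
  have hcard : ∀ w ∈ t, #(t.erase w) = #t - 1 := fun w hw ↦ Finset.card_erase_of_mem hw
  have := card_le_mStar v (t.erase v) (hnbr v hv) fun w hw ↦ by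
    have hwt := Finset.mem_of_mem_erase hw
    rw [hcard v hv, ← hcard w hwt, ← Set.ncard_coe_finset]
    exact Set.ncard_le_ncard (hnbr w hwt)
  have := hcard v hv
  omega

lemma IsBVertex.sub_one_le_ncard_neighborSet {k : ℕ} {c : V → ℕ} {w : V}
    (hw : IsBVertex G k c w) : k - 1 ≤ (G.neighborSet w).ncard := by
  have hsub : (↑((Finset.Icc 1 k).erase (c w)) : Set ℕ) ⊆ c '' G.neighborSet w := by
    intro j hj
    obtain ⟨hjw, hj⟩ := Finset.mem_erase.1 hj
    obtain ⟨y, hwy, rfl⟩ := hw j (by simpa using hj) hjw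
    exact ⟨y, hwy, rfl⟩
  calc k - 1 = #(Finset.Icc 1 k) - 1 := by simp
    _ ≤ #((Finset.Icc 1 k).erase (c w)) := Finset.pred_card_le_card_erase
    _ ≤ (c '' G.neighborSet w).ncard := by
      rw [← Set.ncard_coe_finset]; exact Set.ncard_le_ncard hsub (Set.toFinite _)
    _ ≤ (G.neighborSet w).ncard := Set.ncard_image_le (Set.toFinite _)

lemma IsBStarColoring.le_mStar_add_one {k : ℕ} {c : V → ℕ} (h : IsBStarColoring G k c) :
    k ≤ mStar G + 1 := by
  classical
  obtain ⟨-, u, hu, -, hnice⟩ := h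
  have : Nonempty V := ⟨u⟩
  have hnbr : ∀ j ∈ Finset.Icc 1 (k - 1), ∃ w, G.Adj u w ∧ c w = j ∧ IsBVertex G k c w := by
    intro j hj
    rw [Finset.mem_Icc] at hj
    exact hnice j ⟨hj.1, by omega⟩ (by omega)
  choose! f hfu hfc hfb using hnbr
  have hinj : Set.InjOn f ↑(Finset.Icc 1 (k - 1)) := fun i hi j hj hij ↦
    (hfc i hi).symm.trans (hij ▸ hfc j hj)
  have hcard : #((Finset.Icc 1 (k - 1)).image f) = k - 1 := by
    rw [Finset.card_image_of_injOn hinj, Nat.card_Icc, Nat.add_sub_cancel]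
  have hsub : ↑((Finset.Icc 1 (k - 1)).image f) ⊆ G.neighborSet u := fun v hv ↦ by
    obtain ⟨j, hj, rfl⟩ := Finset.mem_image.1 hv
    exact hfu j hj
  have := card_le_mStar u _ hsub fun v hv ↦ by
    obtain ⟨j, hj, rfl⟩ := Finset.mem_image.1 hv
    rw [hcard]
    exact (hfb j hj).sub_one_le_ncard_neighborSet
  omega

end mStar

namespace IsBlockGraph

variable [Finite V] {G : SimpleGraph V} {α : Type*} {C : Finset α}

lemma isClique_of_connected (hG : IsBlockGraph G) {S : Set V}
    (hconn : (G.induce S).Connected)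
    (hcut : ∀ v ∈ S, (G.induce (S \ {v})).Preconnected) : G.IsClique S := by
  set F : Set (Set V) := {T | S ⊆ T ∧ (G.induce T).Connected ∧
    ∀ v ∈ T, (G.induce (T \ {v})).Preconnected}
  obtain ⟨T, ⟨hST, hT⟩, hmax⟩ :=
    Set.Finite.exists_maximalFor Set.ncard F (Set.toFinite F) ⟨S, subset_rfl, hconn, hcut⟩
  refine (hG T ⟨?_, hT.1, hT.2, fun B hTB hB hBcut ↦ ?_⟩).subset hST
  · obtain ⟨⟨v, hv⟩⟩ := hconn.nonempty
    exact ⟨v, hST hv⟩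
  · exact (Set.eq_of_subset_of_ncard_le hTB
      (hmax ⟨hST.trans hTB, hB, hBcut⟩ (Set.ncard_le_ncard hTB)) (Set.toFinite _)).symm

/-- The path closed up through `w` is a cycle, and a cycle has no cut vertex, so it lies in a
block. -/
lemma adj_of_walk (hG : IsBlockGraph G) {w x y : V} (hwx : G.Adj w x) (hwy : G.Adj w y)
    (hxy : x ≠ y) (p : G.Walk x y) (hwp : w ∉ p.support) :
    G.Adj x y := by
  classical
  let q : G.Walk x y := p.bypass
  have hq : q.IsPath := p.bypass_isPath
  have hwq : w ∉ q.support := fun h ↦ hwp (p.support_bypass_subset_support h)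
  set P : Set V := {z | z ∈ q.support}
  have hconn : (G.induce (insert w P)).Connected := by
    rw [Set.insert_eq]
    exact connected_induce_union (by rw [induce_singleton_eq_top]; exact preconnected_top)
      q.connected_induce_support.preconnected rfl q.start_mem_support hwx
  refine hG.isClique_of_connected hconn (fun v hv ↦ ?_) (.inr q.start_mem_support)
    (.inr q.end_mem_support) hxy
  rcases hv with rfl | hvq
  · rw [Set.insert_sdiff_self_of_notMem (s := P) hwq]
    exact q.connected_induce_support.preconnected
  refine preconnected_induce_of_forall_walk (c := w) fun a ha ↦ ?_
  have hw : w ∈ insert w P \ {v} := ⟨.inl rfl, fun h ↦ hwq (h ▸ hvq)⟩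
  have hstep : ∀ e, G.Adj w e → ∀ r : G.Walk e a, (∀ z ∈ r.support, z ∈ q.support ∧ z ≠ v) →
      ∃ p : G.Walk w a, ∀ z ∈ p.support, z ∈ insert w P \ {v} := fun e hwe r hr ↦
    ⟨.cons hwe r, fun z hz ↦ by
      rcases List.mem_cons.1 (Walk.support_cons _ _ ▸ hz) with rfl | hz
      exacts [hw, ⟨.inr (hr z hz).1, (hr z hz).2⟩]⟩
  rcases ha.1 with rfl | haq
  · exact ⟨.nil, fun z hz ↦ (Walk.mem_support_nil_iff.1 hz) ▸ hw⟩
  rcases hq.exists_walk_from_end_avoiding haq ha.2 with ⟨r, hr⟩ | ⟨r, hr⟩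
  exacts [hstep x hwx r hr, hstep y hwy r hr]

lemma adj_of_two_common_neighbors (hG : IsBlockGraph G) {a b x y : V} (hax : G.Adj a x)
    (hay : G.Adj a y) (hbx : G.Adj b x) (hby : G.Adj b y) (hab : a ≠ b) (hxy : x ≠ y) :
    G.Adj x y :=
  hG.adj_of_walk hax hay hxy (.cons hbx.symm (.cons hby .nil)) (by simp [hax.ne, hab, hay.ne])

lemma isClique_neighborSet_inter (hG : IsBlockGraph G) {S : Set V} (hS : G.ConnectsWithin S)
    {w : V} (hw : w ∉ S) : G.IsClique (G.neighborSet w ∩ S) := by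
  rintro x ⟨hwx, hx⟩ y ⟨hwy, hy⟩ hxy
  obtain ⟨p, hp⟩ := hS x hx y hy (hwx.symm.reachable.trans hwy.reachable)
  exact hG.adj_of_walk hwx hwy hxy p fun h ↦ hw (hp w h)

theorem exists_extend_coloring (hG : IsBlockGraph G) (hC : G.cliqueNum ≤ #C) {S : Set V}
    (hS : G.ConnectsWithin S) {c : V → α}
    (hcC : ∀ v ∈ S, c v ∈ C) (hc : ∀ x ∈ S, ∀ y ∈ S, G.Adj x y → c x ≠ c y) :
    ∃ c' : V → α, (∀ v ∈ S, c' v = c v) ∧ (∀ v, c' v ∈ C) ∧ ∀ x y, G.Adj x y → c' x ≠ c' y := by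
  classical
  induction hn : Sᶜ.ncard generalizing S c with
  | zero =>
    obtain rfl : S = Set.univ := by
      simpa using (Set.ncard_eq_zero (Set.toFinite Sᶜ)).1 hn
    exact ⟨c, fun _ _ ↦ rfl, fun v ↦ hcC v trivial, fun x y ↦ hc x trivial y trivial⟩
  | succ n ih =>
    obtain ⟨v, hv, hS'⟩ := hS.exists_insert (by rintro rfl; simp at hn)
    obtain ⟨a, haC, ha⟩ :=
      exists_mem_forall_adj_ne_of_isClique hC hv (hG.isClique_neighborSet_inter hS hv) c
    have hupd : ∀ x ∈ S, Function.update c v a x = c x :=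
      fun x hx ↦ Function.update_of_ne (by rintro rfl; exact hv hx) _ _
    have hcolor : ∀ x ∈ insert v S, Function.update c v a x ∈ C := by
      rintro x (rfl | hx)
      exacts [by simpa using haC, (hupd x hx).symm ▸ hcC x hx]
    have hproper : ∀ x ∈ insert v S, ∀ y ∈ insert v S, G.Adj x y →
        Function.update c v a x ≠ Function.update c v a y := by
      rintro x (rfl | hx) y (rfl | hy) hxy
      · exact absurd hxy G.irrefl
      · simpa [hupd y hy] using (ha y hy hxy).symm
      · simpa [hupd x hx] using ha x hx hxy.symm
      · simpa [hupd x hx, hupd y hy] using hc x hx y hy hxy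
    have hcard : (insert v S)ᶜ.ncard = n := by
      rw [show (insert v S)ᶜ = Sᶜ \ {v} by ext; simp [and_comm],
        Set.ncard_sdiff_singleton_of_mem hv, hn, Nat.add_sub_cancel]
    obtain ⟨c', hc'S, hc'⟩ := ih hS' hcolor hproper hcard
    exact ⟨c', fun x hx ↦ (hc'S x (.inr hx)).trans (hupd x hx), hc'⟩

lemma subsingleton_commonNeighbors (hG : IsBlockGraph G) {u w : V} (hne : u ≠ w)
    (hnadj : ¬G.Adj u w) : (G.commonNeighbors u w).Subsingleton := by
  intro x hx y hy
  by_contra hxy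
  rw [mem_commonNeighbors] at hx hy
  exact hnadj (hG.adj_of_two_common_neighbors hx.1.symm hx.2.symm hy.1.symm hy.2.symm hxy hne)

lemma isClique_closedNeighborSet_inter (hG : IsBlockGraph G) {u x : V} (hux : G.Adj u x) :
    G.IsClique (G.closedNeighborSet x ∩ G.closedNeighborSet u) := by
  rintro a ⟨ha | hxa, ha'⟩ b ⟨hb | hxb, hb'⟩ hab
  · exact absurd (ha.trans hb.symm) hab
  · exact ha ▸ hxb
  · exact hb ▸ hxa.symm
  rcases ha' with rfl | hua
  · exact hb'.resolve_left (Ne.symm hab)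
  rcases hb' with rfl | hub
  · exact hua.symm
  exact hG.adj_of_two_common_neighbors hxa hxb hua hub hux.ne' hab

lemma eq_of_mem_neighborSet_sdiff_of_adj (hG : IsBlockGraph G) {u x y w : V}
    (hux : G.Adj u x) (huy : G.Adj u y) (hw : w ∈ G.neighborSet x \ G.closedNeighborSet u)
    (hyw : G.Adj y w) : x = y :=
  hG.subsingleton_commonNeighbors (fun h ↦ hw.2 (.inl h.symm)) (fun h ↦ hw.2 (.inr h))
    (G.mem_commonNeighbors.2 ⟨hux, hw.1.symm⟩) (G.mem_commonNeighbors.2 ⟨huy, hyw.symm⟩)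

lemma eq_of_adj_of_mem_neighborSet_sdiff (hG : IsBlockGraph G) {u x y w w' : V}
    (hux : G.Adj u x) (huy : G.Adj u y) (hw : w ∈ G.neighborSet x \ G.closedNeighborSet u)
    (hw' : w' ∈ G.neighborSet y \ G.closedNeighborSet u) (hww' : G.Adj w w') : x = y := by
  by_contra hxy
  have hwy : w ≠ y := by rintro rfl; exact hw.2 (.inr huy)
  have hwu : w ≠ u := fun h ↦ hw.2 (.inl h)
  have hw'x : w' ≠ x := by rintro rfl; exact hw'.2 (.inr hux)
  have hadj : G.Adj w' x := hG.adj_of_walk hww' hw.1.symm hw'x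
    (.cons hw'.1.symm (.cons huy.symm (.cons hux .nil))) (by simp [hww'.ne, hwy, hwu, hw.1.ne'])
  exact hxy (hG.eq_of_mem_neighborSet_sdiff_of_adj huy hux hw' hadj.symm).symm

/-- `N[x] ∩ N[u]` is a clique, so it shows `|N[x] ∩ N[u]|` colours; the missing ones can be
placed on the outer neighbours of `x`, which are at least as many since `|N[x]| ≥ |C|`. -/
lemma exists_bijOn_missing_colors (hG : IsBlockGraph G) {c : V → α} (hcC : ∀ v, c v ∈ C)
    (hc : ∀ x y, G.Adj x y → c x ≠ c y) {u x : V} (hux : G.Adj u x)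
    (hdeg : #C ≤ (G.neighborSet x).ncard + 1) :
    ∃ W ⊆ G.neighborSet x \ G.closedNeighborSet u, ∃ g : V → α,
      Set.BijOn g W (↑C \ c '' (G.closedNeighborSet x ∩ G.closedNeighborSet u)) := by
  have : Nonempty α := ⟨c u⟩
  set B := G.closedNeighborSet x ∩ G.closedNeighborSet u
  have hinj : Set.InjOn c B := fun a ha b hb hab ↦
    by_contra fun hne ↦ hc a b (hG.isClique_closedNeighborSet_inter hux ha hb hne) hab
  have hB : B.ncard = (G.neighborSet x ∩ G.closedNeighborSet u).ncard + 1 := by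
    rw [show B = insert x (G.neighborSet x ∩ G.closedNeighborSet u) from
      Set.insert_inter_of_mem (.inr hux), Set.ncard_insert_of_notMem fun h ↦ G.irrefl h.1]
  have hsplit := Set.ncard_inter_add_ncard_sdiff_eq_ncard (G.neighborSet x) (G.closedNeighborSet u)
  have hle : (↑C \ c '' B).ncard ≤ (G.neighborSet x \ G.closedNeighborSet u).ncard := by
    rw [Set.ncard_sdiff (by rintro _ ⟨v, -, rfl⟩; exact hcC v), hinj.ncard_image,
      Set.ncard_coe_finset]
    omega
  obtain ⟨W, hW, hWcard⟩ := Set.exists_subset_encard_eq (k := (↑C \ c '' B).encard)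
    (s := G.neighborSet x \ G.closedNeighborSet u) (by
    rwa [← (Set.toFinite _).cast_ncard_eq, ← (Set.toFinite _).cast_ncard_eq, Nat.cast_le])
  obtain ⟨g, hg⟩ := (Set.toFinite W).exists_bijOn_of_encard_eq hWcard
  exact ⟨W, hW, g, hg⟩

/-- An outer neighbour of `x` has no neighbour in `N[u]` other than `x`, and outer neighbours of
distinct `x` are non-adjacent, so `d` on the `W x` and `c` on `N[u]` colour their union properly. -/
lemma exists_coloring_eqOn_closedNeighborSet_and_outer (hG : IsBlockGraph G)
    (hC : G.cliqueNum ≤ #C) {c : V → α} (hcC : ∀ v, c v ∈ C)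
    (hc : ∀ x y, G.Adj x y → c x ≠ c y) {u : V} {s : Set V} (hs : s ⊆ G.neighborSet u)
    {W : V → Set V} (hW : ∀ x ∈ s, W x ⊆ G.neighborSet x \ G.closedNeighborSet u) {d : V → α}
    (hdC : ∀ x ∈ s, ∀ w ∈ W x, d w ∈ C) (hdx : ∀ x ∈ s, ∀ w ∈ W x, d w ≠ c x)
    (hd : ∀ x ∈ s, Set.InjOn d (W x)) :
    ∃ c' : V → α, (∀ v, c' v ∈ C) ∧ (∀ x y, G.Adj x y → c' x ≠ c' y) ∧
      Set.EqOn c' c (G.closedNeighborSet u) ∧ ∀ x ∈ s, Set.EqOn c' d (W x) := by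
  classical
  set T := ⋃ x ∈ s, W x
  have hTu : ∀ v ∈ T, v ∉ G.closedNeighborSet u := fun v hv ↦
    let ⟨x, hx, hvx⟩ := Set.mem_iUnion₂.1 hv
    (hW x hx hvx).2
  set c₀ := T.piecewise d c
  have hc₀c : Set.EqOn c₀ c (G.closedNeighborSet u) := fun v hv ↦
    Set.piecewise_eq_of_notMem _ _ _ fun h ↦ hTu v h hv
  have hc₀d : ∀ x ∈ s, Set.EqOn c₀ d (W x) := fun x hx v hv ↦
    Set.piecewise_eq_of_mem _ _ _ (Set.mem_biUnion hx hv)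
  have hS := connectsWithin_closedNeighborSet_union hs fun x hx ↦ (hW x hx).trans Set.sdiff_subset
  have hcolor : ∀ v ∈ G.closedNeighborSet u ∪ T, c₀ v ∈ C := by
    rintro v (hv | hv)
    · exact hc₀c hv ▸ hcC v
    · obtain ⟨x, hx, hvx⟩ := Set.mem_iUnion₂.1 hv
      exact hc₀d x hx hvx ▸ hdC x hx v hvx
  have hkey : ∀ v ∈ G.closedNeighborSet u ∪ T, ∀ x ∈ s, ∀ w ∈ W x, G.Adj v w → c₀ v ≠ c₀ w := by
    rintro v (hv | hv) x hx w hw hvw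
    · obtain rfl : v = x := by
        rcases hv with rfl | huv
        · exact absurd (.inr hvw) (hW x hx hw).2
        · exact (hG.eq_of_mem_neighborSet_sdiff_of_adj (hs hx) huv (hW x hx hw) hvw).symm
      rw [hc₀c hv, hc₀d v hx hw]
      exact (hdx v hx w hw).symm
    · obtain ⟨y, hy, hvy⟩ := Set.mem_iUnion₂.1 hv
      obtain rfl := hG.eq_of_adj_of_mem_neighborSet_sdiff (hs hy) (hs hx) (hW y hy hvy)
        (hW x hx hw) hvw
      rw [hc₀d y hy hvy, hc₀d y hy hw]
      exact (hd y hy).ne hvy hw hvw.ne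
  have hproper : ∀ v ∈ G.closedNeighborSet u ∪ T, ∀ w ∈ G.closedNeighborSet u ∪ T,
      G.Adj v w → c₀ v ≠ c₀ w := by
    rintro v hv w (hw | hw) hvw
    · rcases hv with hv | hv
      · rw [hc₀c hv, hc₀c hw]
        exact hc v w hvw
      · obtain ⟨x, hx, hvx⟩ := Set.mem_iUnion₂.1 hv
        exact (hkey w (.inl hw) x hx v hvx hvw.symm).symm
    · obtain ⟨x, hx, hwx⟩ := Set.mem_iUnion₂.1 hw
      exact hkey v hv x hx w hwx hvw
  obtain ⟨c', hc'S, hc'C, hc'⟩ := hG.exists_extend_coloring hC hS hcolor hproper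
  exact ⟨c', hc'C, hc', fun v hv ↦ (hc'S v (.inl hv)).trans (hc₀c hv),
    fun x hx v hv ↦ (hc'S v (.inr (Set.mem_biUnion hx hv))).trans (hc₀d x hx hv)⟩

lemma exists_coloring_subset_image_closedNeighborSet (hG : IsBlockGraph G)
    (hC : G.cliqueNum ≤ #C) {c : V → α} (hcC : ∀ v, c v ∈ C)
    (hc : ∀ x y, G.Adj x y → c x ≠ c y) {u : V} {s : Set V} (hs : s ⊆ G.neighborSet u)
    (hdeg : ∀ x ∈ s, #C ≤ (G.neighborSet x).ncard + 1) :
    ∃ c' : V → α, (∀ v, c' v ∈ C) ∧ (∀ x y, G.Adj x y → c' x ≠ c' y) ∧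
      Set.EqOn c' c (G.closedNeighborSet u) ∧ ∀ x ∈ s, ↑C ⊆ c' '' G.closedNeighborSet x := by
  have : Nonempty α := ⟨c u⟩
  have hmissing := fun x hx ↦ hG.exists_bijOn_missing_colors hcC hc (hs hx) (hdeg x hx)
  choose! W hW g hg using hmissing
  have hdisj : s.PairwiseDisjoint W := fun x hx y hy hxy ↦ Set.disjoint_left.2 fun w hwx hwy ↦
    hxy (hG.eq_of_mem_neighborSet_sdiff_of_adj (hs hx) (hs hy) (hW x hx hwx) (hW y hy hwy).1)
  obtain ⟨d, hd⟩ := hdisj.exists_eqOn g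
  have hdmem : ∀ x ∈ s, ∀ w ∈ W x,
      d w ∈ ↑C \ c '' (G.closedNeighborSet x ∩ G.closedNeighborSet u) := fun x hx w hw ↦
    hd x hx hw ▸ (hg x hx).mapsTo hw
  obtain ⟨c', hc'C, hc', hc'u, hc'W⟩ := hG.exists_coloring_eqOn_closedNeighborSet_and_outer hC hcC
    hc hs hW (fun x hx w hw ↦ (hdmem x hx w hw).1)
    (fun x hx w hw h ↦ (hdmem x hx w hw).2 ⟨x, ⟨.inl rfl, .inr (hs hx)⟩, h.symm⟩)
    (fun x hx ↦ (hg x hx).injOn.congr (hd x hx).symm)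
  refine ⟨c', hc'C, hc', hc'u, fun x hx a ha ↦ ?_⟩
  by_cases hseen : a ∈ c '' (G.closedNeighborSet x ∩ G.closedNeighborSet u)
  · obtain ⟨y, ⟨hyx, hyu⟩, rfl⟩ := hseen
    exact ⟨y, hyx, hc'u hyu⟩
  · obtain ⟨w, hw, rfl⟩ := (hg x hx).surjOn ⟨ha, hseen⟩
    exact ⟨w, .inr (hW x hx hw).1, (hc'W x hx hw).trans (hd x hx hw)⟩

lemma exists_coloring_bijOn (hG : IsBlockGraph G) {u : V} {s : Finset V}
    (hs : ↑s ⊆ G.neighborSet u) (hC : G.cliqueNum ≤ #s + 1) :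
    ∃ c : V → ℕ, (∀ v, c v ∈ Finset.Icc 1 (#s + 1)) ∧ (∀ x y, G.Adj x y → c x ≠ c y) ∧
      c u = #s + 1 ∧ Set.BijOn c s (Set.Icc 1 #s) := by
  classical
  obtain ⟨f, hf⟩ := s.finite_toSet.exists_bijOn_of_encard_eq (t := Set.Icc 1 #s)
    (by simpa using (Set.encard_coe_eq_coe_finsetCard (Finset.Icc 1 #s)).symm)
  have hus : u ∉ s := fun h ↦ G.irrefl (hs h)
  set c₀ := Function.update f u (#s + 1)
  have hc₀s : Set.EqOn c₀ f s := fun x hx ↦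
    Function.update_of_ne (by rintro rfl; exact hus hx) _ _
  have hS : G.ConnectsWithin (insert u s) := by
    refine connectsWithin_of_forall_walk (c := u) fun a ha ↦ ?_
    rcases ha with rfl | ha
    · exact ⟨.nil, by simp⟩
    · refine ⟨.cons (show G.Adj u a from hs ha) .nil, fun z hz ↦ ?_⟩
      obtain rfl | rfl : z = u ∨ z = a := by simpa using hz
      exacts [.inl rfl, .inr ha]
  have hcolor : ∀ v ∈ insert u (s : Set V), c₀ v ∈ Finset.Icc 1 (#s + 1) := by
    rintro v (rfl | hv)
    · simp [c₀]
    · have := hf.mapsTo hv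
      simp only [Set.mem_Icc] at this
      simp only [Finset.mem_Icc, hc₀s hv]
      omega
  have hproper : ∀ x ∈ insert u (s : Set V), ∀ y ∈ insert u (s : Set V),
      G.Adj x y → c₀ x ≠ c₀ y := by
    have hlt : ∀ y ∈ s, c₀ y < c₀ u := fun y hy ↦ by
      simpa [hc₀s hy, c₀] using Nat.lt_succ_of_le (hf.mapsTo hy).2
    rintro x (rfl | hx) y (rfl | hy) hxy
    · exact absurd hxy G.irrefl
    · exact (hlt y hy).ne'
    · exact (hlt x hx).ne
    · rw [hc₀s hx, hc₀s hy]
      exact hf.injOn.ne hx hy hxy.ne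
  obtain ⟨c, hcS, hcC, hc⟩ := hG.exists_extend_coloring (by simpa using hC) hS hcolor hproper
  exact ⟨c, hcC, hc, (hcS u (.inl rfl)).trans (by simp [c₀]),
    hf.congr fun x hx ↦ ((hcS x (.inr hx)).trans (hc₀s hx)).symm⟩

theorem exists_isBStarColoring (hG : IsBlockGraph G) {u : V} {s : Finset V}
    (hs : ↑s ⊆ G.neighborSet u) (hdeg : ∀ x ∈ s, #s ≤ (G.neighborSet x).ncard)
    (hC : G.cliqueNum ≤ #s + 1) : ∃ c, IsBStarColoring G (#s + 1) c := by
  obtain ⟨c₁, hc₁C, hc₁, hc₁u, hc₁s⟩ := hG.exists_coloring_bijOn hs hC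
  obtain ⟨c, hcC, hc, hcc₁, hcsee⟩ := hG.exists_coloring_subset_image_closedNeighborSet
    (by simpa using hC) hc₁C hc₁ hs (by simpa using hdeg)
  have hcu : c u = #s + 1 := (hcc₁ (.inl rfl)).trans hc₁u
  have hsurj : ∀ j ∈ Set.Icc 1 #s, ∃ x ∈ s, c x = j := fun j hj ↦
    let ⟨x, hx, hxj⟩ := hc₁s.surjOn hj
    ⟨x, hx, (hcc₁ (.inr (hs hx))).trans hxj⟩
  have hnice : ∀ j ∈ Set.Icc 1 (#s + 1), j ≠ c u →
      ∃ w, G.Adj u w ∧ c w = j ∧ IsBVertex G (#s + 1) c w := by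
    intro j ⟨hj₁, hj₂⟩ hju
    obtain ⟨x, hx, rfl⟩ := hsurj j ⟨hj₁, by omega⟩
    exact ⟨x, hs hx, rfl, isBVertex_of_subset_image (by simpa using hcsee x hx)⟩
  refine ⟨c, ⟨fun v ↦ by simpa using hcC v, hc, fun j ⟨hj₁, hj₂⟩ ↦ ?_⟩, u, hcu,
    fun j hj hju ↦ (hnice j hj hju).imp fun _ h ↦ ⟨h.1, h.2.1⟩, hnice⟩
  by_cases hjs : j = #s + 1
  · exact ⟨u, hcu.trans hjs.symm⟩
  · obtain ⟨x, -, hx⟩ := hsurj j ⟨hj₁, by omega⟩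
    exact ⟨x, hx⟩

end IsBlockGraph

/-- for every block graph `G` with at least one vertex,
`b*(G) = m*(G) + 1`. -/
theorem blockGraph_bStar_eq_mStar_add_one [Fintype V] [Nonempty V]
    (G : SimpleGraph V) (hbg : IsBlockGraph G) :
    bStar G = mStar G + 1 := by
  obtain ⟨u, s, hs, hcard, hdeg⟩ := exists_mStar (G := G)
  obtain ⟨c, hc⟩ :=
    hbg.exists_isBStarColoring hs (hcard ▸ hdeg) (hcard ▸ cliqueNum_le_mStar_add_one)
  have hle : ∀ k ∈ {k | ∃ c : V → ℕ, IsBStarColoring G k c}, k ≤ mStar G + 1 :=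
    fun _ ⟨_, hc⟩ ↦ hc.le_mStar_add_one
  exact le_antisymm (csSup_le ⟨_, c, hc⟩ hle) (hcard ▸ le_csSup ⟨_, hle⟩ ⟨c, hc⟩)
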